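/- With the setup of the arborescence-cut characterization: if p is a directed path from u to v in G' of total length at most K, and T is an arborescence rooted at u with d_T(u,v) > K, then some edge of p belongs to S_T, i.e., there exists an index i such that ℓ(p_i, p_{i+1}) < L_T(p_{i+1}) − L_T(p_i). -/

import Mathlib

/-- `p` is a directed path from `u` to `v` along relation `R`. -/
def IsPathFrom {V : Type} (R : V → V → Prop) (u v : V) (p : List V) : Prop :=
  p ≠ [] ∧ p.head? = some u ∧ p.getLast? = some v ∧ p.Chain' R

/-- Total length of a path, summing edge lengths over consecutive pairs. -/
def pathLen {V : Type} (ℓ : V → V → ℝ) (p : List V) : ℝ :=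
  ((p.zip p.tail).map fun e => ℓ e.1 e.2).sum

/-- An arborescence rooted at `u`, with `L w = d_T(u,w)` the tree distance. -/
structure Arborescence {V : Type} (E : V → V → Prop) (ℓ : V → V → ℝ) (u : V) where
  par : V → V
  L : V → ℝ
  par_root : par u = u
  reach : ∀ w, ∃ j, par^[j] w = u
  edge : ∀ w, w ≠ u → E (par w) w
  L_root : L u = 0
  L_step : ∀ w, w ≠ u → L w = L (par w) + ℓ (par w) w

/-!
If no edge `(pᵢ, pᵢ₊₁)` of the path lies in `S_T`, then `L_T` grows by at most `ℓ(pᵢ, pᵢ₊₁)`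
along every edge, so telescoping gives `L_T(v) - L_T(u) ≤ ℓ(p) ≤ K`; since `L_T(u) = 0`, this
contradicts `d_T(u, v) > K`.
-/

section Telescoping

variable {V : Type} (ℓ : V → V → ℝ)

theorem pathLen_cons_cons (a b : V) (t : List V) :
    pathLen ℓ (a :: b :: t) = ℓ a b + pathLen ℓ (b :: t) := by
  simp [pathLen]

theorem List.IsChain.sub_head_le_pathLen {L : V → ℝ} :
    ∀ {p : List V}, p.IsChain (fun x y => L y ≤ L x + ℓ x y) → (hp : p ≠ []) →
      L (p.getLast hp) - L (p.head hp) ≤ pathLen ℓ p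
  | [_], _, _ => by simp [pathLen]
  | a :: b :: t, hc, _ => by
    rw [List.isChain_cons_cons] at hc
    have ih := hc.2.sub_head_le_pathLen (List.cons_ne_nil b t)
    rw [pathLen_cons_cons, List.getLast_cons_cons]
    simp only [List.head_cons] at ih ⊢
    linarith [hc.1]

theorem exists_lt_sub_of_pathLen_lt {L : V → ℝ} {p : List V} (hp : p ≠ [])
    (h : pathLen ℓ p < L (p.getLast hp) - L (p.head hp)) :
    ∃ i, ∃ h : i + 1 < p.length,
      ℓ (p[i]'(Nat.lt_of_succ_lt h)) p[i + 1] < L p[i + 1] - L (p[i]'(Nat.lt_of_succ_lt h)) := by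
  by_contra! hall
  have hc : p.IsChain (fun x y => L y ≤ L x + ℓ x y) :=
    List.isChain_iff_getElem.2 fun i hi => by linarith [hall i hi]
  linarith [hc.sub_head_le_pathLen ℓ hp]

end Telescoping

/-- If `p` is a `u`–`v` path in `G'` of length at most `K` and `T` is an
arborescence rooted at `u` with `d_T(u,v) > K`, then some edge of `p` is in
`S_T`, i.e. `ℓ(pᵢ,pᵢ₊₁) < L_T(pᵢ₊₁) − L_T(pᵢ)` for some `i`. -/
theorem stmt1 {V : Type} (E : V → V → Prop) (ℓ : V → V → ℝ)
    (u v : V) (K : ℝ)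
    (T : Arborescence E ℓ u) (hT : K < T.L v)
    (p : List V) (hp : IsPathFrom E u v p) (hlen : pathLen ℓ p ≤ K) :
    ∃ i, ∃ h : i + 1 < p.length,
      ℓ (p.get ⟨i, by omega⟩) (p.get ⟨i + 1, h⟩) <
        T.L (p.get ⟨i + 1, h⟩) - T.L (p.get ⟨i, by omega⟩) := by
  obtain ⟨hne, hhead, hlast, -⟩ := hp
  have hu : p.head hne = u :=
    Option.some_injective _ ((List.head?_eq_some_head hne).symm.trans hhead)
  have hv : p.getLast hne = v :=
    Option.some_injective _ ((List.getLast?_eq_some_getLast hne).symm.trans hlast)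
  have hgap : pathLen ℓ p < T.L (p.getLast hne) - T.L (p.head hne) := by
    rw [hu, hv, T.L_root]
    linarith
  simpa only [List.get_eq_getElem] using exists_lt_sub_of_pathLen_lt ℓ hne hgap
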